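/- arXiv:1402.2388 — 2 statements merged into one kernel-verified Lean document; each statement's English description precedes it below -/
import Mathlib

section
/- Let G₁ = {(s,t) : |s| < 1, 0 < t < 1}. For any ε > 0 and any u ∈ C¹(cl G₁) such that the Lebesgue measure of {(s,t) ∈ G₁ : u(s,t) = 0} is at least ε, one has ∫_{G₁} u² ds dt ≤ C_ε ∫_{G₁} (t u_t² + u_s²) ds dt, where C_ε depends only on ε. -/
/-!
For `p = (s, t)` and `q = (s', t')` in `G₁`, go from `q` vertically to `(s', t)` and then
horizontally to `p`. Cauchy–Schwarz on the horizontal segment costs its length (at most 2) times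
the horizontal energy `X(t) = ∫ u_s(σ, t)² dσ`; on the vertical segment, with the weight `τ`, it
costs `∫ dτ / τ = |log t - log t'| ≤ |log t| + |log t'|` times the weighted vertical energy
`W(s') = ∫ τ u_t(s', τ)² dτ`. Hence
`u(p)² ≤ 3 u(q)² + 6 X(t) + 3 (|log t| + |log t'|) W(s')`.
Averaging over `q` in the zero set `Z` of `u`, integrating in `p`, and using `∫₀¹ |log| = 1` and
Fubini gives `|Z| ∫ u² ≤ 24 ∫ (t u_t² + u_s²)`, so `C_ε = 24 / ε` works. The derivative bounds
that make everything integrable come from `u` being Lipschitz on the compact convex `cl G₁`.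
-/

open MeasureTheory

/-- Partial derivative in the first (s) variable. -/
noncomputable def pds (u : ℝ × ℝ → ℝ) (p : ℝ × ℝ) : ℝ :=
  deriv (fun x => u (x, p.2)) p.1

/-- Partial derivative in the second (t) variable. -/
noncomputable def pdt (u : ℝ × ℝ → ℝ) (p : ℝ × ℝ) : ℝ :=
  deriv (fun y => u (p.1, y)) p.2

/-- The box `G₁ = (-1,1) × (0,1)`. -/
def G1 : Set (ℝ × ℝ) := Set.Ioo (-1 : ℝ) 1 ×ˢ Set.Ioo (0 : ℝ) 1

open Set Topology
open scoped NNReal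

section CauchySchwarz

variable {α : Type*} [MeasurableSpace α] {μ : Measure α}

theorem sq_integral_mul_le_integral_sq_mul_integral_sq {f g : α → ℝ} (hf : MemLp f 2 μ)
    (hg : MemLp g 2 μ) :
    (∫ x, f x * g x ∂μ) ^ 2 ≤ (∫ x, f x ^ 2 ∂μ) * ∫ x, g x ^ 2 ∂μ := by
  have inner_toLp {φ ψ : α → ℝ} (hφ : MemLp φ 2 μ) (hψ : MemLp ψ 2 μ) :
      inner ℝ (hφ.toLp φ) (hψ.toLp ψ) = ∫ x, φ x * ψ x ∂μ := by
    rw [L2.inner_def]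
    refine integral_congr_ae ?_
    filter_upwards [hφ.coeFn_toLp, hψ.coeFn_toLp] with x hφx hψx
    simp [hφx, hψx, mul_comm]
  have h := real_inner_mul_inner_self_le (hf.toLp f) (hg.toLp g)
  simpa only [inner_toLp, ← sq] using h

theorem sq_integral_le_integral_inv_mul_integral_mul_sq {w g : α → ℝ}
    (hw : ∀ᵐ x ∂μ, 0 < w x) (hwm : AEStronglyMeasurable w μ) (hgm : AEStronglyMeasurable g μ)
    (hw_inv : Integrable (fun x => (w x)⁻¹) μ) (hwg : Integrable (fun x => w x * g x ^ 2) μ) :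
    (∫ x, g x ∂μ) ^ 2 ≤ (∫ x, (w x)⁻¹ ∂μ) * ∫ x, w x * g x ^ 2 ∂μ := by
  have hφ : MemLp (fun x => √(w x)⁻¹) 2 μ := by
    refine (memLp_two_iff_integrable_sq hwm.aemeasurable.inv.sqrt.aestronglyMeasurable).2
      (hw_inv.congr ?_)
    filter_upwards [hw] with x hx using (Real.sq_sqrt (inv_pos.2 hx).le).symm
  have hψ : MemLp (fun x => √(w x) * g x) 2 μ := by
    refine (memLp_two_iff_integrable_sq
      (hwm.aemeasurable.sqrt.aestronglyMeasurable.mul hgm)).2 (hwg.congr ?_)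
    filter_upwards [hw] with x hx using by simp only [Pi.mul_apply, mul_pow, Real.sq_sqrt hx.le]
  have h := sq_integral_mul_le_integral_sq_mul_integral_sq hφ hψ
  have hφψ : (fun x => √(w x)⁻¹ * (√(w x) * g x)) =ᵐ[μ] g := by
    filter_upwards [hw] with x hx
    rw [Real.sqrt_inv, ← mul_assoc, inv_mul_cancel₀ (Real.sqrt_pos.2 hx).ne', one_mul]
  have hφ2 : (fun x => √(w x)⁻¹ ^ 2) =ᵐ[μ] fun x => (w x)⁻¹ := by
    filter_upwards [hw] with x hx using Real.sq_sqrt (inv_pos.2 hx).le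
  have hψ2 : (fun x => (√(w x) * g x) ^ 2) =ᵐ[μ] fun x => w x * g x ^ 2 := by
    filter_upwards [hw] with x hx using by rw [mul_pow, Real.sq_sqrt hx.le]
  rwa [integral_congr_ae hφψ, integral_congr_ae hφ2, integral_congr_ae hψ2] at h

end CauchySchwarz

theorem sq_sub_le_integral_inv_mul_integral_mul_sq_deriv {f w : ℝ → ℝ} {a b K : ℝ} (hab : a ≤ b)
    (hf : ∀ x ∈ Icc a b, DifferentiableAt ℝ f x) (hf' : ∀ x ∈ Icc a b, |deriv f x| ≤ K)
    (hw : ContinuousOn w (Icc a b)) (hw0 : ∀ x ∈ Icc a b, 0 < w x) :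
    (f b - f a) ^ 2 ≤ (∫ x in a..b, (w x)⁻¹) * ∫ x in a..b, w x * deriv f x ^ 2 := by
  have hmem : ∀ᵐ x ∂(volume.restrict (Ioc a b)), x ∈ Icc a b :=
    (ae_restrict_mem measurableSet_Ioc).mono fun x hx => Ioc_subset_Icc_self hx
  have hderiv : IntegrableOn (deriv f) (Ioc a b) :=
    Measure.integrableOn_of_bounded measure_Ioc_lt_top.ne (measurable_deriv f).aestronglyMeasurable
      (hmem.mono fun x hx => hf' x hx)
  obtain ⟨C, hC⟩ := isCompact_Icc.exists_bound_of_continuousOn hw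
  have hwm : AEStronglyMeasurable w (volume.restrict (Ioc a b)) :=
    (hw.mono Ioc_subset_Icc_self).aestronglyMeasurable measurableSet_Ioc
  rw [← intervalIntegral.integral_deriv_eq_sub
      (fun x hx => hf x (uIcc_of_le hab ▸ hx))
      ((intervalIntegrable_iff_integrableOn_Ioc_of_le hab).2 hderiv),
    intervalIntegral.integral_of_le hab, intervalIntegral.integral_of_le hab,
    intervalIntegral.integral_of_le hab]
  refine sq_integral_le_integral_inv_mul_integral_mul_sq (hmem.mono hw0) hwm
    (measurable_deriv f).aestronglyMeasurable
    (((hw.inv₀ fun x hx => (hw0 x hx).ne').integrableOn_Icc).mono_set Ioc_subset_Icc_self) ?_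
  refine Integrable.of_bound
    (hwm.mul ((measurable_deriv f).pow_const 2).aestronglyMeasurable) (C * K ^ 2) ?_
  filter_upwards [hmem] with x hx
  rw [norm_mul, norm_pow, Real.norm_eq_abs (deriv f x)]
  exact mul_le_mul (hC x hx) (pow_le_pow_left₀ (abs_nonneg _) (hf' x hx) 2) (by positivity)
    ((norm_nonneg _).trans (hC x hx))

section PartialDerivatives

variable {u : ℝ × ℝ → ℝ} {p : ℝ × ℝ}

theorem DifferentiableAt.differentiableAt_slice_fst (hu : DifferentiableAt ℝ u p) :
    DifferentiableAt ℝ (fun x => u (x, p.2)) p.1 :=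
  hu.comp p.1 (differentiableAt_id.prodMk (differentiableAt_const _))

theorem DifferentiableAt.differentiableAt_slice_snd (hu : DifferentiableAt ℝ u p) :
    DifferentiableAt ℝ (fun y => u (p.1, y)) p.2 :=
  hu.comp p.2 ((differentiableAt_const _).prodMk differentiableAt_id)

theorem pds_eq_fderiv (hu : DifferentiableAt ℝ u p) : pds u p = fderiv ℝ u p (1, 0) :=
  (hu.hasFDerivAt.comp_hasDerivAt p.1
    ((hasDerivAt_id p.1).prodMk (hasDerivAt_const p.1 p.2))).deriv

theorem pdt_eq_fderiv (hu : DifferentiableAt ℝ u p) : pdt u p = fderiv ℝ u p (0, 1) :=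
  (hu.hasFDerivAt.comp_hasDerivAt p.2
    ((hasDerivAt_const p.2 p.1).prodMk (hasDerivAt_id p.2))).deriv

theorem abs_pds_le_of_lipschitzOnWith {s : Set (ℝ × ℝ)} {K : ℝ≥0} (hu : LipschitzOnWith K u s)
    (hs : s ∈ 𝓝 p) : |pds u p| ≤ K := by
  have hslice : LipschitzOnWith K (fun x => u (x, p.2)) ((fun x => (x, p.2)) ⁻¹' s) := by
    simpa [Function.comp_def] using
      hu.comp (LipschitzWith.prodMk_right p.2).lipschitzOnWith (mapsTo_preimage _ _)
  exact norm_deriv_le_of_lipschitzOn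
    ((continuous_id.prodMk continuous_const).continuousAt.preimage_mem_nhds hs) hslice

theorem abs_pdt_le_of_lipschitzOnWith {s : Set (ℝ × ℝ)} {K : ℝ≥0} (hu : LipschitzOnWith K u s)
    (hs : s ∈ 𝓝 p) : |pdt u p| ≤ K := by
  have hslice : LipschitzOnWith K (fun y => u (p.1, y)) ((fun y => (p.1, y)) ⁻¹' s) := by
    simpa [Function.comp_def] using
      hu.comp (LipschitzWith.prodMk_left p.1).lipschitzOnWith (mapsTo_preimage _ _)
  exact norm_deriv_le_of_lipschitzOn
    ((continuous_const.prodMk continuous_id).continuousAt.preimage_mem_nhds hs) hslice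

variable {μ : Measure (ℝ × ℝ)} {s : Set (ℝ × ℝ)}

theorem aestronglyMeasurable_pds (hs : MeasurableSet s) (hu : ∀ p ∈ s, DifferentiableAt ℝ u p) :
    AEStronglyMeasurable (pds u) (μ.restrict s) :=
  (measurable_fderiv_apply_const ℝ u (1, 0)).aestronglyMeasurable.congr
    ((ae_restrict_mem hs).mono fun p hp => (pds_eq_fderiv (hu p hp)).symm)

theorem aestronglyMeasurable_pdt (hs : MeasurableSet s) (hu : ∀ p ∈ s, DifferentiableAt ℝ u p) :
    AEStronglyMeasurable (pdt u) (μ.restrict s) :=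
  (measurable_fderiv_apply_const ℝ u (0, 1)).aestronglyMeasurable.congr
    ((ae_restrict_mem hs).mono fun p hp => (pdt_eq_fderiv (hu p hp)).symm)

end PartialDerivatives

theorem integrableOn_log_Ioo_zero_one : IntegrableOn Real.log (Ioo 0 1) :=
  (intervalIntegrable_iff_integrableOn_Ioo_of_le zero_le_one).1
    intervalIntegral.intervalIntegrable_log'

theorem integral_log_Ioo_zero_one : ∫ t in Ioo (0 : ℝ) 1, Real.log t = -1 := by
  rw [← integral_Ioc_eq_integral_Ioo, ← intervalIntegral.integral_of_le zero_le_one,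
    integral_log]
  simp

theorem isOpen_G1 : IsOpen G1 := isOpen_Ioo.prod isOpen_Ioo

theorem measurableSet_G1 : MeasurableSet G1 := isOpen_G1.measurableSet

theorem closure_G1 : closure G1 = Icc (-1 : ℝ) 1 ×ˢ Icc (0 : ℝ) 1 := by
  rw [G1, closure_prod_eq, closure_Ioo (by norm_num), closure_Ioo (by norm_num)]

theorem isCompact_closure_G1 : IsCompact (closure G1) := by
  rw [closure_G1]
  exact isCompact_Icc.prod isCompact_Icc

theorem convex_closure_G1 : Convex ℝ (closure G1) :=
  ((convex_Ioo _ _).prod (convex_Ioo _ _)).closure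

theorem volume_restrict_G1 :
    volume.restrict G1
      = (volume.restrict (Ioo (-1 : ℝ) 1)).prod (volume.restrict (Ioo (0 : ℝ) 1)) := by
  rw [Measure.prod_restrict, ← Measure.volume_eq_prod, G1]

theorem volume_G1_ne_top : volume G1 ≠ ⊤ := by
  rw [G1, Measure.volume_eq_prod, Measure.prod_prod]
  exact ENNReal.mul_ne_top measure_Ioo_lt_top.ne measure_Ioo_lt_top.ne

instance isFiniteMeasure_restrict_G1 : IsFiniteMeasure (volume.restrict G1) :=
  isFiniteMeasure_restrict.2 volume_G1_ne_top

theorem setIntegral_G1_mul (g h : ℝ → ℝ) :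
    ∫ p in G1, g p.1 * h p.2 = (∫ s in Ioo (-1 : ℝ) 1, g s) * ∫ t in Ioo (0 : ℝ) 1, h t := by
  rw [G1, Measure.volume_eq_prod]
  exact setIntegral_prod_mul g h _ _

theorem setIntegral_G1_snd (h : ℝ → ℝ) : ∫ p in G1, h p.2 = 2 * ∫ t in Ioo (0 : ℝ) 1, h t := by
  simpa [one_add_one_eq_two] using setIntegral_G1_mul (fun _ => 1) h

theorem integrableOn_G1_mul {g h : ℝ → ℝ} (hg : IntegrableOn g (Ioo (-1) 1))
    (hh : IntegrableOn h (Ioo 0 1)) : IntegrableOn (fun p : ℝ × ℝ => g p.1 * h p.2) G1 := by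
  rw [IntegrableOn, volume_restrict_G1]
  exact hg.mul_prod hh

theorem integrableOn_G1_snd {h : ℝ → ℝ} (hh : IntegrableOn h (Ioo 0 1)) :
    IntegrableOn (fun p : ℝ × ℝ => h p.2) G1 := by
  simpa using integrableOn_G1_mul (g := fun _ => 1) (integrableOn_const measure_Ioo_lt_top.ne) hh

theorem volume_real_G1 : volume.real G1 = 2 := by
  simpa using setIntegral_G1_snd (fun _ => 1)

noncomputable def horizontalEnergy (u : ℝ × ℝ → ℝ) (t : ℝ) : ℝ :=
  ∫ σ in Ioo (-1 : ℝ) 1, pds u (σ, t) ^ 2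

noncomputable def verticalEnergy (u : ℝ × ℝ → ℝ) (s : ℝ) : ℝ :=
  ∫ τ in Ioo (0 : ℝ) 1, τ * pdt u (s, τ) ^ 2

section Energies

variable {u : ℝ × ℝ → ℝ} {K : ℝ}

theorem horizontalEnergy_nonneg (t : ℝ) : 0 ≤ horizontalEnergy u t :=
  setIntegral_nonneg measurableSet_Ioo fun _ _ => sq_nonneg _

theorem verticalEnergy_nonneg (s : ℝ) : 0 ≤ verticalEnergy u s :=
  setIntegral_nonneg measurableSet_Ioo fun _ hτ => mul_nonneg hτ.1.le (sq_nonneg _)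

theorem integrableOn_sq_pds_slice (hKs : ∀ p ∈ G1, |pds u p| ≤ K) {t : ℝ}
    (ht : t ∈ Ioo (0 : ℝ) 1) : IntegrableOn (fun σ => pds u (σ, t) ^ 2) (Ioo (-1) 1) := by
  refine Measure.integrableOn_of_bounded (M := K ^ 2) measure_Ioo_lt_top.ne
    ((measurable_deriv fun x => u (x, t)).pow_const 2).aestronglyMeasurable ?_
  filter_upwards [ae_restrict_mem measurableSet_Ioo] with σ hσ
  rw [Real.norm_of_nonneg (sq_nonneg _)]
  exact sq_le_sq.2 ((hKs (σ, t) ⟨hσ, ht⟩).trans (le_abs_self K))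

theorem integrableOn_mul_sq_pdt_slice (hKt : ∀ p ∈ G1, |pdt u p| ≤ K) {s : ℝ}
    (hs : s ∈ Ioo (-1 : ℝ) 1) : IntegrableOn (fun τ => τ * pdt u (s, τ) ^ 2) (Ioo 0 1) := by
  refine Measure.integrableOn_of_bounded (M := K ^ 2) measure_Ioo_lt_top.ne
    (measurable_id.mul ((measurable_deriv fun y => u (s, y)).pow_const 2)).aestronglyMeasurable ?_
  filter_upwards [ae_restrict_mem measurableSet_Ioo] with τ hτ
  rw [Real.norm_of_nonneg (mul_nonneg hτ.1.le (sq_nonneg _))]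
  nlinarith [sq_le_sq.2 ((hKt (s, τ) ⟨hs, hτ⟩).trans (le_abs_self K)), sq_nonneg (pdt u (s, τ)),
    hτ.1, hτ.2]

variable (hd : ∀ p ∈ G1, DifferentiableAt ℝ u p)
include hd

theorem sq_sub_le_horizontalEnergy (hKs : ∀ p ∈ G1, |pds u p| ≤ K) {s s' t : ℝ}
    (hs : s ∈ Ioo (-1 : ℝ) 1) (hs' : s' ∈ Ioo (-1 : ℝ) 1) (ht : t ∈ Ioo (0 : ℝ) 1) :
    (u (s, t) - u (s', t)) ^ 2 ≤ 2 * horizontalEnergy u t := by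
  wlog hss' : s' ≤ s generalizing s s'
  · rw [← neg_sub, neg_sq]
    exact this hs' hs (le_of_not_ge hss')
  have hsub : Icc s' s ⊆ Ioo (-1) 1 := Icc_subset_Ioo hs'.1 hs.2
  have h := sq_sub_le_integral_inv_mul_integral_mul_sq_deriv (f := fun x => u (x, t))
    (w := fun _ => 1) hss' (fun x hx => (hd (x, t) ⟨hsub hx, ht⟩).differentiableAt_slice_fst)
    (fun x hx => hKs (x, t) ⟨hsub hx, ht⟩) continuousOn_const fun _ _ => one_pos
  simp only [inv_one, one_mul, intervalIntegral.integral_const, smul_eq_mul, mul_one] at h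
  have hslice : ∫ x in s'..s, pds u (x, t) ^ 2 ≤ horizontalEnergy u t := by
    rw [intervalIntegral.integral_of_le hss']
    exact setIntegral_mono_set (integrableOn_sq_pds_slice hKs ht)
      (ae_of_all _ fun _ => sq_nonneg _)
      (Ioc_subset_Icc_self.trans hsub).eventuallyLE
  calc _ ≤ (s - s') * ∫ x in s'..s, pds u (x, t) ^ 2 := h
    _ ≤ 2 * horizontalEnergy u t :=
      mul_le_mul (by linarith [hs.2, hs'.1]) hslice
        (intervalIntegral.integral_nonneg hss' fun _ _ => sq_nonneg _) zero_le_two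

theorem sq_sub_le_verticalEnergy (hKt : ∀ p ∈ G1, |pdt u p| ≤ K) {s t t' : ℝ}
    (hs : s ∈ Ioo (-1 : ℝ) 1) (ht : t ∈ Ioo (0 : ℝ) 1) (ht' : t' ∈ Ioo (0 : ℝ) 1) :
    (u (s, t) - u (s, t')) ^ 2 ≤ -(Real.log t + Real.log t') * verticalEnergy u s := by
  wlog htt' : t' ≤ t generalizing t t'
  · rw [← neg_sub, neg_sq, add_comm]
    exact this ht' ht (le_of_not_ge htt')
  have hsub : Icc t' t ⊆ Ioo 0 1 := Icc_subset_Ioo ht'.1 ht.2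
  have h := sq_sub_le_integral_inv_mul_integral_mul_sq_deriv (f := fun y => u (s, y))
    (w := id) htt' (fun y hy => (hd (s, y) ⟨hs, hsub hy⟩).differentiableAt_slice_snd)
    (fun y hy => hKt (s, y) ⟨hs, hsub hy⟩) continuousOn_id fun y hy => (hsub hy).1
  simp only [id] at h
  rw [integral_inv_of_pos ht'.1 ht.1, Real.log_div ht.1.ne' ht'.1.ne'] at h
  have hslice : ∫ y in t'..t, y * pdt u (s, y) ^ 2 ≤ verticalEnergy u s := by
    rw [intervalIntegral.integral_of_le htt']
    exact setIntegral_mono_set (integrableOn_mul_sq_pdt_slice hKt hs)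
      ((ae_restrict_mem measurableSet_Ioo).mono fun y hy => mul_nonneg hy.1.le (sq_nonneg _))
      (Ioc_subset_Icc_self.trans hsub).eventuallyLE
  have hlog_t := Real.log_nonpos ht.1.le ht.2.le
  have hlog_t' := Real.log_nonpos ht'.1.le ht'.2.le
  calc _ ≤ (Real.log t - Real.log t') * ∫ y in t'..t, y * pdt u (s, y) ^ 2 := h
    _ ≤ -(Real.log t + Real.log t') * verticalEnergy u s :=
      mul_le_mul (by linarith) hslice
        (intervalIntegral.integral_nonneg htt' fun y hy =>
          mul_nonneg (ht'.1.trans_le hy.1).le (sq_nonneg _)) (by linarith)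

theorem sq_le_of_mem_G1 (hKs : ∀ p ∈ G1, |pds u p| ≤ K) (hKt : ∀ p ∈ G1, |pdt u p| ≤ K)
    {p q : ℝ × ℝ} (hp : p ∈ G1) (hq : q ∈ G1) :
    u p ^ 2 ≤ 3 * u q ^ 2 + 6 * horizontalEnergy u p.2
      - 3 * (Real.log p.2 + Real.log q.2) * verticalEnergy u q.1 := by
  obtain ⟨s, t⟩ := p
  obtain ⟨s', t'⟩ := q
  obtain ⟨hs, ht⟩ := hp
  obtain ⟨hs', ht'⟩ := hq
  have horizontal := sq_sub_le_horizontalEnergy hd hKs hs hs' ht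
  have vertical := sq_sub_le_verticalEnergy hd hKt hs' ht ht'
  nlinarith [sq_nonneg (u (s', t') - (u (s', t) - u (s', t'))),
    sq_nonneg (u (s', t') - (u (s, t) - u (s', t))),
    sq_nonneg (u (s', t) - u (s', t') - (u (s, t) - u (s', t)))]

theorem integrableOn_sq_pds (hKs : ∀ p ∈ G1, |pds u p| ≤ K) :
    IntegrableOn (fun p => pds u p ^ 2) G1 := by
  refine Integrable.of_bound ((aestronglyMeasurable_pds measurableSet_G1 hd).pow 2) (K ^ 2) ?_
  filter_upwards [ae_restrict_mem measurableSet_G1] with p hp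
  rw [Real.norm_of_nonneg (sq_nonneg _)]
  exact sq_le_sq.2 ((hKs p hp).trans (le_abs_self K))

theorem integrableOn_mul_sq_pdt (hKt : ∀ p ∈ G1, |pdt u p| ≤ K) :
    IntegrableOn (fun p : ℝ × ℝ => p.2 * pdt u p ^ 2) G1 := by
  refine Integrable.of_bound (measurable_snd.aestronglyMeasurable.mul
    ((aestronglyMeasurable_pdt measurableSet_G1 hd).pow 2)) (K ^ 2) ?_
  filter_upwards [ae_restrict_mem measurableSet_G1] with p hp
  rw [Real.norm_of_nonneg (mul_nonneg hp.2.1.le (sq_nonneg _))]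
  nlinarith [sq_le_sq.2 ((hKt p hp).trans (le_abs_self K)), sq_nonneg (pdt u p), hp.2.1, hp.2.2]

theorem integrableOn_horizontalEnergy (hKs : ∀ p ∈ G1, |pds u p| ≤ K) :
    IntegrableOn (horizontalEnergy u) (Ioo 0 1) := by
  have h := integrableOn_sq_pds hd hKs
  rw [IntegrableOn, volume_restrict_G1] at h
  exact h.integral_prod_right

theorem integrableOn_verticalEnergy (hKt : ∀ p ∈ G1, |pdt u p| ≤ K) :
    IntegrableOn (verticalEnergy u) (Ioo (-1) 1) := by
  have h := integrableOn_mul_sq_pdt hd hKt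
  rw [IntegrableOn, volume_restrict_G1] at h
  exact h.integral_prod_left

theorem integral_horizontalEnergy (hKs : ∀ p ∈ G1, |pds u p| ≤ K) :
    ∫ t in Ioo (0 : ℝ) 1, horizontalEnergy u t = ∫ p in G1, pds u p ^ 2 := by
  have h := integrableOn_sq_pds hd hKs
  rw [IntegrableOn, volume_restrict_G1] at h
  rw [volume_restrict_G1, integral_prod_symm _ h]
  rfl

theorem integral_verticalEnergy (hKt : ∀ p ∈ G1, |pdt u p| ≤ K) :
    ∫ s in Ioo (-1 : ℝ) 1, verticalEnergy u s = ∫ p in G1, p.2 * pdt u p ^ 2 := by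
  have h := integrableOn_mul_sq_pdt hd hKt
  rw [IntegrableOn, volume_restrict_G1] at h
  rw [volume_restrict_G1, integral_prod _ h]
  rfl

theorem measureReal_mul_sq_le (hKs : ∀ p ∈ G1, |pds u p| ≤ K) (hKt : ∀ p ∈ G1, |pdt u p| ≤ K)
    {Z : Set (ℝ × ℝ)} (hZ : MeasurableSet Z) (hZG1 : Z ⊆ G1) (hZu : ∀ q ∈ Z, u q = 0)
    {p : ℝ × ℝ} (hp : p ∈ G1) :
    volume.real Z * u p ^ 2 ≤ 12 * horizontalEnergy u p.2
      + 3 * (∫ s in Ioo (-1 : ℝ) 1, verticalEnergy u s) * (1 - Real.log p.2) := by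
  set F : ℝ × ℝ → ℝ := fun q => 6 * horizontalEnergy u p.2
    + verticalEnergy u q.1 * (-3 * (Real.log p.2 + Real.log q.2))
  have hlog : IntegrableOn (fun τ => Real.log p.2 + Real.log τ) (Ioo 0 1) :=
    (integrableOn_const measure_Ioo_lt_top.ne).add integrableOn_log_Ioo_zero_one
  have hWlog : IntegrableOn
      (fun q : ℝ × ℝ => verticalEnergy u q.1 * (-3 * (Real.log p.2 + Real.log q.2))) G1 :=
    integrableOn_G1_mul (integrableOn_verticalEnergy hd hKt) (hlog.const_mul _)
  have hF : IntegrableOn F G1 := (integrableOn_const volume_G1_ne_top).add hWlog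
  have hF0 : ∀ q ∈ G1, 0 ≤ F q := fun q hq =>
    add_nonneg (mul_nonneg (by norm_num) (horizontalEnergy_nonneg _))
      (mul_nonneg (verticalEnergy_nonneg _) (by
        nlinarith [Real.log_nonpos hp.2.1.le hp.2.2.le, Real.log_nonpos hq.2.1.le hq.2.2.le]))
  have hZF : ∀ q ∈ Z, u p ^ 2 ≤ F q := fun q hq => by
    have h := sq_le_of_mem_G1 hd hKs hKt hp (hZG1 hq)
    rw [hZu q hq] at h
    linarith
  have hintF : ∫ q in G1, F q = 12 * horizontalEnergy u p.2
      + 3 * (∫ s in Ioo (-1 : ℝ) 1, verticalEnergy u s) * (1 - Real.log p.2) := by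
    simp only [F]
    rw [integral_add (integrable_const _) hWlog, setIntegral_const,
      volume_real_G1,
      setIntegral_G1_mul (verticalEnergy u) fun τ => -3 * (Real.log p.2 + Real.log τ),
      integral_const_mul,
      integral_add (integrable_const _) integrableOn_log_Ioo_zero_one,
      setIntegral_const, integral_log_Ioo_zero_one]
    simp
    ring
  calc volume.real Z * u p ^ 2 ≤ ∫ q in Z, F q :=
        setIntegral_ge_of_const_le hZ (measure_ne_top_of_subset hZG1 volume_G1_ne_top) hZF
          (hF.mono_set hZG1)
    _ ≤ ∫ q in G1, F q :=
        setIntegral_mono_set hF (ae_restrict_of_forall_mem measurableSet_G1 hF0) hZG1.eventuallyLE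
    _ = _ := hintF

theorem measureReal_mul_integral_sq_le (hKs : ∀ p ∈ G1, |pds u p| ≤ K)
    (hKt : ∀ p ∈ G1, |pdt u p| ≤ K) (hu2 : IntegrableOn (fun p => u p ^ 2) G1)
    {Z : Set (ℝ × ℝ)} (hZ : MeasurableSet Z) (hZG1 : Z ⊆ G1) (hZu : ∀ q ∈ Z, u q = 0) :
    volume.real Z * ∫ p in G1, u p ^ 2 ≤ 24 * ∫ p in G1, (p.2 * pdt u p ^ 2 + pds u p ^ 2) := by
  set EX := ∫ t in Ioo (0 : ℝ) 1, horizontalEnergy u t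
  set EW := ∫ s in Ioo (-1 : ℝ) 1, verticalEnergy u s
  have hX := integrableOn_horizontalEnergy hd hKs
  have hlog : IntegrableOn (fun t => 1 - Real.log t) (Ioo 0 1) :=
    (integrable_const _).sub integrableOn_log_Ioo_zero_one
  have hEW : 0 ≤ EW := setIntegral_nonneg measurableSet_Ioo fun s _ => verticalEnergy_nonneg s
  calc volume.real Z * ∫ p in G1, u p ^ 2 = ∫ p in G1, volume.real Z * u p ^ 2 :=
        (integral_const_mul _ _).symm
    _ ≤ ∫ p in G1, (12 * horizontalEnergy u p.2 + 3 * EW * (1 - Real.log p.2)) :=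
        setIntegral_mono_on (hu2.const_mul _)
          (integrableOn_G1_snd ((hX.const_mul 12).add (hlog.const_mul _))) measurableSet_G1
          fun p hp => measureReal_mul_sq_le hd hKs hKt hZ hZG1 hZu hp
    _ = 24 * EX + 12 * EW := by
        rw [setIntegral_G1_snd fun t => 12 * horizontalEnergy u t + 3 * EW * (1 - Real.log t),
          integral_add (hX.const_mul 12) (hlog.const_mul _), integral_const_mul,
          integral_const_mul, integral_sub (integrable_const _) integrableOn_log_Ioo_zero_one,
          setIntegral_const, integral_log_Ioo_zero_one]
        simp
        ring
    _ ≤ 24 * (EW + EX) := by linarith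
    _ = 24 * ∫ p in G1, (p.2 * pdt u p ^ 2 + pds u p ^ 2) := by
        rw [integral_add (integrableOn_mul_sq_pdt hd hKt) (integrableOn_sq_pds hd hKs),
          ← integral_horizontalEnergy hd hKs, ← integral_verticalEnergy hd hKt]

end Energies

theorem ContinuousOn.measurableSet_sep_eq {α β : Type*} [TopologicalSpace α] [MeasurableSpace α]
    [OpensMeasurableSpace α] [TopologicalSpace β] [T1Space β] {f : α → β} {s : Set α}
    (hf : ContinuousOn f s) (hs : IsOpen s) (c : β) : MeasurableSet {x ∈ s | f x = c} := by
  have h : {x ∈ s | f x = c} = s \ (s ∩ f ⁻¹' {c}ᶜ) := by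
    ext x
    simp +contextual
  rw [h]
  exact hs.measurableSet.diff (hf.isOpen_inter_preimage hs isOpen_compl_singleton).measurableSet

theorem closure_G1_mem_nhds {p : ℝ × ℝ} (hp : p ∈ G1) : closure G1 ∈ 𝓝 p :=
  Filter.mem_of_superset (isOpen_G1.mem_nhds hp) subset_closure

theorem exists_abs_pds_le_and_abs_pdt_le {u : ℝ × ℝ → ℝ} (hu : ContDiffOn ℝ 1 u (closure G1)) :
    ∃ K : ℝ, ∀ p ∈ G1, |pds u p| ≤ K ∧ |pdt u p| ≤ K := by
  obtain ⟨K, hK⟩ := (hu.locallyLipschitzOn convex_closure_G1).exists_lipschitzOnWith_of_compact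
    isCompact_closure_G1
  exact ⟨K, fun p hp => ⟨abs_pds_le_of_lipschitzOnWith hK (closure_G1_mem_nhds hp),
    abs_pdt_le_of_lipschitzOnWith hK (closure_G1_mem_nhds hp)⟩⟩

theorem measureReal_zeroSet_mul_integral_sq_le {u : ℝ × ℝ → ℝ}
    (hu : ContDiffOn ℝ 1 u (closure G1)) :
    volume.real {p ∈ G1 | u p = 0} * ∫ p in G1, u p ^ 2
      ≤ 24 * ∫ p in G1, (p.2 * pdt u p ^ 2 + pds u p ^ 2) := by
  obtain ⟨K, hK⟩ := exists_abs_pds_le_and_abs_pdt_le hu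
  have hd : ∀ p ∈ G1, DifferentiableAt ℝ u p := fun p hp =>
    (hu.differentiableOn one_ne_zero).differentiableAt (closure_G1_mem_nhds hp)
  have hu2 : IntegrableOn (fun p => u p ^ 2) G1 :=
    ((hu.continuousOn.pow 2).integrableOn_compact isCompact_closure_G1).mono_set subset_closure
  exact measureReal_mul_integral_sq_le hd (fun p hp => (hK p hp).1) (fun p hp => (hK p hp).2) hu2
    ((hu.continuousOn.mono subset_closure).measurableSet_sep_eq isOpen_G1 0)
    (fun _ hp => hp.1) fun _ hp => hp.2

/-- Weighted Poincaré inequality: if `u ∈ C¹(cl G₁)` vanishes on a subset of `G₁` of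
measure at least `ε`, then `∫_{G₁} u² ≤ C_ε ∫_{G₁} (t u_t² + u_s²)`. -/
theorem stmt1 (ε : ℝ) (hε : 0 < ε) :
    ∃ C : ℝ, 0 < C ∧
      ∀ u : ℝ × ℝ → ℝ, ContDiffOn ℝ 1 u (closure G1) →
        ENNReal.ofReal ε ≤ volume {p ∈ G1 | u p = 0} →
        ∫ p in G1, (u p) ^ 2 ≤ C * ∫ p in G1, (p.2 * (pdt u p) ^ 2 + (pds u p) ^ 2) := by
  refine ⟨24 / ε, by positivity, fun u hu hZ => ?_⟩
  have hZε : ε ≤ volume.real {p ∈ G1 | u p = 0} :=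
    (ENNReal.ofReal_le_iff_le_toReal
      (measure_ne_top_of_subset (fun _ hp => hp.1) volume_G1_ne_top)).1 hZ
  have hu2 : 0 ≤ ∫ p in G1, u p ^ 2 := setIntegral_nonneg measurableSet_G1 fun _ _ => sq_nonneg _
  rw [div_mul_eq_mul_div, le_div_iff₀ hε]
  calc (∫ p in G1, u p ^ 2) * ε ≤ volume.real {p ∈ G1 | u p = 0} * ∫ p in G1, u p ^ 2 := by
        rw [mul_comm]
        exact mul_le_mul_of_nonneg_right hZε hu2
    _ ≤ _ := measureReal_zeroSet_mul_integral_sq_le hu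
end

section
/- Let Σ be an oriented C⁴ surface in ℝ³ whose Gauss curvature K vanishes along a boundary component σ, with ∇K ≠ 0 on σ, and suppose the unit normal of Σ is constant along σ (σ is a planar curve tangent to Σ). In geodesic coordinates (s,t) with base curve σ where the metric is g = B² ds² + dt² with B(·,0) = 1 and B_t(·,0) = -k_g > 0, the coefficients L, M, N of the second fundamental form satisfy on t = 0: L = M = 0, N = √(K_t / B_t), and L_t = √(K_t B_t). -/
theorem DifferentiableAt.hasDerivAt_pdt {u : ℝ × ℝ → ℝ} {p : ℝ × ℝ}
    (hu : DifferentiableAt ℝ u p) : HasDerivAt (fun y => u (p.1, y)) (pdt u p) p.2 :=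
  (hu.comp p.2 ((differentiableAt_const p.1).prodMk differentiableAt_id)).hasDerivAt

theorem pds_eq_zero_of_forall_eq {u : ℝ × ℝ → ℝ} {t c : ℝ} (h : ∀ x, u (x, t) = c) (s : ℝ) :
    pds u (s, t) = 0 := by
  simp only [pds, h, deriv_const]

theorem mul_pdt_eq_pdt_mul_sq_of_gauss {B K L M N : ℝ × ℝ → ℝ} {p : ℝ × ℝ}
    (hB : DifferentiableAt ℝ B p) (hK : DifferentiableAt ℝ K p) (hL : DifferentiableAt ℝ L p)
    (hM : DifferentiableAt ℝ M p) (hN : DifferentiableAt ℝ N p)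
    (hGauss : ∀ q, N q * L q - M q ^ 2 = K q * B q ^ 2)
    (hLp : L p = 0) (hMp : M p = 0) (hKp : K p = 0) :
    N p * pdt L p = pdt K p * B p ^ 2 := by
  have hlhs : HasDerivAt (fun y => N (p.1, y) * L (p.1, y) - M (p.1, y) ^ 2) _ p.2 :=
    (hN.hasDerivAt_pdt.mul hL.hasDerivAt_pdt).sub (hM.hasDerivAt_pdt.pow 2)
  have hrhs : HasDerivAt (fun y => K (p.1, y) * B (p.1, y) ^ 2) _ p.2 :=
    hK.hasDerivAt_pdt.mul (hB.hasDerivAt_pdt.pow 2)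
  simp only [hGauss] at hlhs
  simpa [hLp, hMp, hKp] using hlhs.unique hrhs

theorem eq_sqrt_div_and_eq_sqrt_mul {n l k b : ℝ} (hn : 0 ≤ n) (hb : 0 < b)
    (hk : n * l = k) (hl : l = b * n) : n = √(k / b) ∧ l = √(k * b) := by
  subst hk hl
  constructor
  · rw [show n * (b * n) / b = n ^ 2 by field_simp, Real.sqrt_sq hn]
  · rw [show n * (b * n) * b = (b * n) ^ 2 by ring, Real.sqrt_sq (by positivity)]

theorem stmt3_general (B K L M N : ℝ × ℝ → ℝ)
    (hB : ContDiff ℝ 2 B) (hK : ContDiff ℝ 2 K) (hL : ContDiff ℝ 2 L)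
    (hM : ContDiff ℝ 2 M) (hN : ContDiff ℝ 2 N)
    (hB0 : ∀ s : ℝ, B (s, 0) = 1) (hBt0 : ∀ s : ℝ, 0 < pdt B (s, 0))
    (hK0 : ∀ s : ℝ, K (s, 0) = 0)
    (hL0 : ∀ s : ℝ, L (s, 0) = 0) (hM0 : ∀ s : ℝ, M (s, 0) = 0)
    (hN0 : ∀ s : ℝ, 0 < N (s, 0))
    (hGC1 : ∀ p : ℝ × ℝ, pdt L p - pds M p =
      (pdt B p / B p) * L p - (pds B p / B p) * M p + B p * pdt B p * N p)
    (hGC3 : ∀ p : ℝ × ℝ, N p * L p - (M p) ^ 2 = K p * (B p) ^ 2) :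
    ∀ s : ℝ,
      L (s, 0) = 0 ∧ M (s, 0) = 0 ∧
      N (s, 0) = Real.sqrt (pdt K (s, 0) / pdt B (s, 0)) ∧
      pdt L (s, 0) = Real.sqrt (pdt K (s, 0) * pdt B (s, 0)) := by
  intro s
  have hdiff {u : ℝ × ℝ → ℝ} (hu : ContDiff ℝ 2 u) : DifferentiableAt ℝ u (s, 0) :=
    hu.differentiable (by norm_num) _
  have hGauss : N (s, 0) * pdt L (s, 0) = pdt K (s, 0) := by
    have := mul_pdt_eq_pdt_mul_sq_of_gauss (hdiff hB) (hdiff hK) (hdiff hL) (hdiff hM) (hdiff hN)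
      hGC3 (hL0 s) (hM0 s) (hK0 s)
    rwa [hB0 s, one_pow, mul_one] at this
  have hCodazzi : pdt L (s, 0) = pdt B (s, 0) * N (s, 0) := by
    have := hGC1 (s, 0)
    rw [hL0 s, hM0 s, hB0 s, pds_eq_zero_of_forall_eq hM0 s] at this
    linarith
  exact ⟨hL0 s, hM0 s, eq_sqrt_div_and_eq_sqrt_mul (hN0 s).le (hBt0 s) hGauss hCodazzi⟩

/-- Boundary values of the second fundamental form for an Alexandrov–Nirenberg type
surface in geodesic coordinates: if the Gauss–Codazzi equations hold, `K = L = M = 0`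
on `t = 0`, `K_t > 0`, `B_t > 0`, `B = 1` and `N > 0` on `t = 0`, then on `t = 0`
one has `N = √(K_t/B_t)` and `L_t = √(K_t B_t)`. -/
theorem stmt3 (B K L M N : ℝ × ℝ → ℝ)
    (hB : ContDiff ℝ 2 B) (hK : ContDiff ℝ 2 K) (hL : ContDiff ℝ 2 L)
    (hM : ContDiff ℝ 2 M) (hN : ContDiff ℝ 2 N)
    (hBpos : ∀ p : ℝ × ℝ, 0 < B p)
    (hB0 : ∀ s : ℝ, B (s, 0) = 1) (hBt0 : ∀ s : ℝ, 0 < pdt B (s, 0))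
    (hK0 : ∀ s : ℝ, K (s, 0) = 0) (hKt0 : ∀ s : ℝ, 0 < pdt K (s, 0))
    (hL0 : ∀ s : ℝ, L (s, 0) = 0) (hM0 : ∀ s : ℝ, M (s, 0) = 0)
    (hN0 : ∀ s : ℝ, 0 < N (s, 0))
    (hGC1 : ∀ p : ℝ × ℝ, pdt L p - pds M p =
      (pdt B p / B p) * L p - (pds B p / B p) * M p + B p * pdt B p * N p)
    (hGC2 : ∀ p : ℝ × ℝ, pdt M p - pds N p = -(pdt B p / B p) * M p)
    (hGC3 : ∀ p : ℝ × ℝ, N p * L p - (M p) ^ 2 = K p * (B p) ^ 2) :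
    ∀ s : ℝ,
      L (s, 0) = 0 ∧ M (s, 0) = 0 ∧
      N (s, 0) = Real.sqrt (pdt K (s, 0) / pdt B (s, 0)) ∧
      pdt L (s, 0) = Real.sqrt (pdt K (s, 0) * pdt B (s, 0)) :=
  stmt3_general B K L M N hB hK hL hM hN hB0 hBt0 hK0 hL0 hM0 hN0 hGC1 hGC3
end
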